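/- arXiv:2301.05877 — 2 statements merged into one kernel-verified Lean document; each statement's English description precedes it below -/
import Mathlib

section
/- Let Λ be a graph and Λ' a subgraph of Λ. If Λ is a strong forest relative to Λ', then the quotient graph Λ/Λ' is a forest. -/
/-- A combinatorial graph (Serre style): edges come with a fixed-point-free
reversal involution; loops and multiple edges are allowed. -/
structure SGraph where
  V : Type
  E : Type
  init : E → V
  bar : E → E
  bar_bar : ∀ e, bar (bar e) = e
  bar_ne : ∀ e, bar e ≠ e

namespace SGraph

variable (G : SGraph)

/-- Terminal vertex of an edge. -/
def term (e : G.E) : G.V := G.init (G.bar e)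

/-- Consecutive edges of the list match up. -/
def IsChain (l : List G.E) : Prop :=
  List.Chain' (fun e f => G.term e = G.init f) l

/-- A cycle: a nonempty closed edge path. -/
def IsCycle (l : List G.E) : Prop :=
  l ≠ [] ∧ G.IsChain l ∧
    ∀ e f, l.head? = some e → l.getLast? = some f → G.term f = G.init e

/-- A reduced cycle: no edge is followed (cyclically) by its reverse. -/
def IsReducedCycle (l : List G.E) : Prop :=
  G.IsCycle l ∧ List.Chain' (fun e f => f ≠ G.bar e) l ∧
    ∀ e f, l.head? = some e → l.getLast? = some f → e ≠ G.bar f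

/-- A graph is a forest if it contains no reduced cycle. -/
def IsForestGraph : Prop := ∀ l, ¬ G.IsReducedCycle l

/-- A subgraph: a set of vertices and a set of edges, closed under reversal,
with endpoints among the chosen vertices. -/
structure Subgraph (G : SGraph) where
  verts : Set G.V
  edges : Set G.E
  bar_mem : ∀ ⦃e⦄, e ∈ edges → G.bar e ∈ edges
  init_mem : ∀ ⦃e⦄, e ∈ edges → G.init e ∈ verts

variable {G}

namespace Subgraph

/-- Subgraph containment. -/
def le (H K : Subgraph G) : Prop := H.verts ⊆ K.verts ∧ H.edges ⊆ K.edges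

/-- Intersection of two subgraphs. -/
def inter (H K : Subgraph G) : Subgraph G where
  verts := H.verts ∩ K.verts
  edges := H.edges ∩ K.edges
  bar_mem := fun _ he => ⟨H.bar_mem he.1, K.bar_mem he.2⟩
  init_mem := fun _ he => ⟨H.init_mem he.1, K.init_mem he.2⟩

/-- All edges of the list lie in the subgraph. -/
def EdgesIn (H : Subgraph G) (l : List G.E) : Prop := ∀ e ∈ l, e ∈ H.edges

/-- A reduced cycle contained in the subgraph. -/
def IsReducedCycleIn (H : Subgraph G) (l : List G.E) : Prop :=
  G.IsReducedCycle l ∧ H.EdgesIn l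

/-- A subgraph is a forest if it contains no reduced cycle. -/
def IsForest (H : Subgraph G) : Prop := ∀ l, ¬ H.IsReducedCycleIn l

/-- Reachability inside a subgraph by edge paths. -/
inductive Reaches (H : Subgraph G) : G.V → G.V → Prop
  | refl (v : G.V) (hv : v ∈ H.verts) : Reaches H v v
  | step (e : G.E) (he : e ∈ H.edges) {q : G.V} (h : Reaches H (G.term e) q) :
      Reaches H (G.init e) q

/-- A subgraph is connected if it is nonempty and any two of its vertices are
joined by an edge path in it. -/
def Connected (H : Subgraph G) : Prop :=
  H.verts.Nonempty ∧ ∀ p ∈ H.verts, ∀ q ∈ H.verts, H.Reaches p q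

/-- A tree is a connected forest. -/
def IsTree (H : Subgraph G) : Prop := H.IsForest ∧ H.Connected

/-- `C` is a connected component of `H`: its vertices form a reachability class
of `H` and its edges are the induced ones. -/
def IsCompOf (C H : Subgraph G) : Prop :=
  ∃ v ∈ H.verts, C.verts = {w | H.Reaches v w} ∧
    C.edges = {e | e ∈ H.edges ∧ G.init e ∈ C.verts}

/-- `H` is a forest relative to `H'`: every reduced cycle of `H` is contained
in `H'`. -/
def ForestRel (H H' : Subgraph G) : Prop :=
  ∀ l, H.IsReducedCycleIn l → H'.EdgesIn l

/-- `H` is a strong forest relative to `H'`: a relative forest such that each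
component of `H` meets `H'` in an empty or connected subgraph. -/
def StrongForestRel (H H' : Subgraph G) : Prop :=
  H.ForestRel H' ∧
    ∀ C : Subgraph G, C.IsCompOf H → (C.inter H').verts = ∅ ∨ (C.inter H').Connected

/-- Euler characteristic: number of vertices minus number of (geometric)
edges; each geometric edge corresponds to a pair `{e, ē}`. -/
noncomputable def eulerChar (H : Subgraph G) : ℤ :=
  (H.verts.ncard : ℤ) - ((H.edges.ncard / 2 : ℕ) : ℤ)

/-- A walk in `H` from `p` to `q`, given as its list of traversed edges. -/
def IsWalk (H : Subgraph G) (p q : G.V) (l : List G.E) : Prop :=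
  H.EdgesIn l ∧ G.IsChain l ∧
    (∀ e, l.head? = some e → G.init e = p) ∧
    (∀ e, l.getLast? = some e → G.term e = q) ∧
    (l = [] → p = q ∧ p ∈ H.verts)

/-- The weight-0 subgraph of a zero/one-weighted subgraph: all of its vertices
together with its edges of weight 0. -/
def zeroSub (H : Subgraph G) (ω : G.E → ℕ) (hbar : ∀ e, ω (G.bar e) = ω e) :
    Subgraph G where
  verts := H.verts
  edges := {e | e ∈ H.edges ∧ ω e = 0}
  bar_mem := fun e he => ⟨H.bar_mem he.1, by rw [hbar]; exact he.2⟩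
  init_mem := fun _ he => H.init_mem he.1

end Subgraph

/-- The full subgraph of a graph. -/
def full (G : SGraph) : Subgraph G where
  verts := Set.univ
  edges := Set.univ
  bar_mem := fun _ _ => Set.mem_univ _
  init_mem := fun _ _ => Set.mem_univ _

open Classical in
/-- The quotient graph `G/H'` obtained by identifying the subgraph `H'` to a
single vertex `∗` (represented by `none`): its vertices are the vertices of
`G` not in `H'` together with `∗`; its edges are the edges of `G` not in `H'`,
with endpoints in `H'` replaced by `∗`. -/
noncomputable def quot (G : SGraph) (H' : Subgraph G) : SGraph where
  V := Option {v : G.V // v ∉ H'.verts}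
  E := {e : G.E // e ∉ H'.edges}
  init e := if h : G.init e.1 ∈ H'.verts then none else some ⟨G.init e.1, h⟩
  bar e := ⟨G.bar e.1, fun hc => e.2 (by simpa [G.bar_bar] using H'.bar_mem hc)⟩
  bar_bar e := Subtype.ext (G.bar_bar e.1)
  bar_ne e := fun hc => G.bar_ne e.1 (congrArg Subtype.val hc)

end SGraph

/-!
A reduced cycle of `Λ/Λ'` that avoids `∗` lifts to a reduced cycle of `Λ` outside `Λ'`, which
relative forestness forbids. Otherwise start the cycle at `∗` and cut it at its first return to
`∗`: this gives a nonempty reduced path `σ` of `Λ` outside `Λ'` joining two vertices `a`, `b` of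
`Λ'`. They lie in one component `C` of `Λ`, and `C ∩ Λ'` is connected, so a reduced path `π` in
`Λ'` leads from `b` back to `a`. If `π` is empty, cyclically reducing `σ` leaves a reduced cycle
outside `Λ'`; otherwise `σπ` is already a reduced cycle, since an edge outside `Λ'` is never the
reverse of one in `Λ'`. Either way `Λ` has a reduced cycle not contained in `Λ'`.
-/

namespace List

variable {α : Type*} {R S : α → α → Prop}

def IsCyclicChain (R : α → α → Prop) (l : List α) : Prop :=
  IsChain R l ∧ ∀ x ∈ l.getLast?, ∀ y ∈ l.head?, R x y

theorem isChain_and {l : List α} :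
    IsChain (fun a b => R a b ∧ S a b) l ↔ IsChain R l ∧ IsChain S l := by
  induction l with
  | nil => simp
  | cons a l ih => simp only [isChain_cons, ih, forall_and]; tauto

theorem IsCyclicChain.append_comm {l₁ l₂ : List α} (h : IsCyclicChain R (l₁ ++ l₂)) :
    IsCyclicChain R (l₂ ++ l₁) := by
  rcases eq_or_ne l₁ [] with rfl | h₁
  · simpa using h
  rcases eq_or_ne l₂ [] with rfl | h₂
  · simpa using h
  obtain ⟨hchain, hclose⟩ := h
  rw [isChain_append] at hchain
  rw [getLast?_append_of_ne_nil _ h₂, head?_append_of_ne_nil _ h₁] at hclose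
  refine ⟨isChain_append.mpr ⟨hchain.2.1, hchain.1, hclose⟩, ?_⟩
  rw [getLast?_append_of_ne_nil _ h₁, head?_append_of_ne_nil _ h₂]
  exact hchain.2.2

end List

namespace SGraph

variable {G : SGraph}

variable (G) in
def Follows (e f : G.E) : Prop := G.term e = G.init f ∧ f ≠ G.bar e

theorem term_bar (e : G.E) : G.term (G.bar e) = G.init e := by
  rw [term, G.bar_bar]

theorem isReducedCycle_iff {l : List G.E} :
    G.IsReducedCycle l ↔ l ≠ [] ∧ l.IsCyclicChain G.Follows := by
  change (_ ∧ l.IsChain _ ∧ _) ∧ l.IsChain _ ∧ _ ↔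
    l ≠ [] ∧ l.IsChain (fun e f => G.term e = G.init f ∧ f ≠ G.bar e) ∧ _
  rw [List.isChain_and]
  constructor
  · rintro ⟨⟨hne, hc, hcl⟩, hr, hrl⟩
    exact ⟨hne, ⟨hc, hr⟩, fun e he f hf => ⟨hcl f e hf he, hrl f e hf he⟩⟩
  · rintro ⟨hne, ⟨hc, hr⟩, hcl⟩
    exact ⟨⟨hne, hc, fun f e hf he => (hcl e he f hf).1⟩, hr, fun f e hf he => (hcl e he f hf).2⟩

theorem IsReducedCycle.append_comm {l₁ l₂ : List G.E} (h : G.IsReducedCycle (l₁ ++ l₂)) :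
    G.IsReducedCycle (l₂ ++ l₁) := by
  rw [isReducedCycle_iff] at h ⊢
  exact ⟨by simpa [and_comm] using h.1, h.2.append_comm⟩

variable {H Λ' : Subgraph G} {p q r : G.V} {e f : G.E} {l l₁ l₂ : List G.E}

namespace Subgraph

theorem bar_mem_iff : G.bar e ∈ H.edges ↔ e ∈ H.edges :=
  ⟨fun h => G.bar_bar e ▸ H.bar_mem h, fun h => H.bar_mem h⟩

theorem Reaches.trans (h₁ : H.Reaches p q) (h₂ : H.Reaches q r) : H.Reaches p r := by
  induction h₁ with
  | refl => exact h₂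
  | step e he _ ih => exact .step e he (ih h₂)

def component (H : Subgraph G) (v : G.V) : Subgraph G where
  verts := {w | H.Reaches v w}
  edges := {e | e ∈ H.edges ∧ G.init e ∈ {w | H.Reaches v w}}
  bar_mem _ he := ⟨H.bar_mem he.1,
    he.2.trans (.step _ he.1 (.refl _ (H.init_mem (H.bar_mem he.1))))⟩
  init_mem _ he := he.2

theorem isCompOf_component {v : G.V} (hv : v ∈ H.verts) : (H.component v).IsCompOf H :=
  ⟨v, hv, rfl, rfl⟩

end Subgraph

variable (G) in
def IsReducedPath (p q : G.V) (l : List G.E) : Prop :=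
  l.IsChain G.Follows ∧ (∀ e ∈ l.head?, G.init e = p) ∧ (∀ e ∈ l.getLast?, G.term e = q) ∧
    (l = [] → p = q)

theorem isReducedPath_nil (p : G.V) : G.IsReducedPath p p [] := by
  simp [IsReducedPath]

theorem IsReducedPath.cons (h : G.IsReducedPath (G.term e) q l)
    (he : ∀ f ∈ l.head?, f ≠ G.bar e) : G.IsReducedPath (G.init e) q (e :: l) := by
  obtain ⟨hc, hh, hl, hn⟩ := h
  refine ⟨hc.cons fun f hf => ⟨(hh f hf).symm, he f hf⟩, by simp, ?_, by simp⟩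
  cases l with
  | nil => simpa using hn rfl
  | cons f l => simpa only [List.getLast?_cons_cons] using hl

theorem IsReducedPath.of_cons (h : G.IsReducedPath p q (e :: l)) :
    G.IsReducedPath (G.term e) q l := by
  obtain ⟨hc, -, hl, -⟩ := h
  refine ⟨hc.tail, fun f hf => (hc.rel_head? hf).1.symm, ?_, ?_⟩
  · cases l with
    | nil => simp
    | cons f l => simpa only [List.getLast?_cons_cons] using hl
  · rintro rfl
    exact hl e rfl

theorem IsReducedPath.of_append_singleton (h : G.IsReducedPath p q (l ++ [f])) :
    G.IsReducedPath p (G.init f) l := by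
  obtain ⟨hc, hh, -, -⟩ := h
  rw [List.isChain_append] at hc
  refine ⟨hc.1, fun e he => hh e (by simp_all [List.head?_append]), ?_, ?_⟩
  · exact fun e he => (hc.2.2 e he f rfl).1
  · rintro rfl
    exact (hh f rfl).symm

theorem IsReducedPath.append (h₁ : G.IsReducedPath p q l₁) (h₂ : G.IsReducedPath q r l₂)
    (hj : ∀ e ∈ l₁.getLast?, ∀ f ∈ l₂.head?, f ≠ G.bar e) : G.IsReducedPath p r (l₁ ++ l₂) := by
  obtain ⟨hc₁, hh₁, hl₁, hn₁⟩ := h₁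
  obtain ⟨hc₂, hh₂, hl₂, hn₂⟩ := h₂
  refine ⟨List.isChain_append.mpr ⟨hc₁, hc₂, fun e he f hf =>
    ⟨(hl₁ e he).trans (hh₂ f hf).symm, hj e he f hf⟩⟩, ?_, ?_, ?_⟩
  · rcases eq_or_ne l₁ [] with rfl | hne
    · simpa [hn₁ rfl] using hh₂
    · rwa [List.head?_append_of_ne_nil _ hne]
  · rcases eq_or_ne l₂ [] with rfl | hne
    · simpa [← hn₂ rfl] using hl₁
    · rwa [List.getLast?_append_of_ne_nil _ hne]
  · simp only [List.append_eq_nil_iff, and_imp]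
    exact fun h₁ h₂ => (hn₁ h₁).trans (hn₂ h₂)

theorem IsReducedPath.isReducedCycle (h : G.IsReducedPath p p l) (hne : l ≠ [])
    (hcl : ∀ e ∈ l.getLast?, ∀ f ∈ l.head?, f ≠ G.bar e) : G.IsReducedCycle l :=
  isReducedCycle_iff.mpr
    ⟨hne, h.1, fun e he f hf => ⟨(h.2.2.1 e he).trans (h.2.1 f hf).symm, hcl e he f hf⟩⟩

/-- Cyclic reduction: strip pairs `e … ē` from the two ends of a closed reduced path. -/
theorem IsReducedPath.exists_isReducedCycle_subset (h : G.IsReducedPath p p l) (hne : l ≠ []) :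
    ∃ c, G.IsReducedCycle c ∧ c ⊆ l := by
  induction hlen : l.length using Nat.strong_induction_on generalizing p l with
  | _ n ih =>
  obtain ⟨e, l', rfl⟩ := List.exists_cons_of_ne_nil hne
  rcases l'.eq_nil_or_concat' with rfl | ⟨m, f, rfl⟩
  · exact ⟨[e], h.isReducedCycle hne (by simpa using (G.bar_ne e).symm), List.Subset.refl _⟩
  by_cases hef : e = G.bar f
  · rcases eq_or_ne m [] with rfl | hm
    · exact absurd (by rw [hef, G.bar_bar]) (List.isChain_pair.mp h.1).2
    have hloop : G.IsReducedPath (G.term e) (G.term e) m := by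
      simpa [hef, term_bar] using h.of_cons.of_append_singleton
    obtain ⟨c, hc, hcm⟩ := ih m.length (by simp [← hlen]) hloop hm rfl
    exact ⟨c, hc, fun x hx => by simp [hcm hx]⟩
  · refine ⟨_, h.isReducedCycle hne ?_, List.Subset.refl _⟩
    rw [← List.cons_append, List.getLast?_concat]
    simpa using hef

theorem IsReducedPath.reaches (h : G.IsReducedPath p q l) : G.full.Reaches p q := by
  induction l generalizing p with
  | nil => exact h.2.2.2 rfl ▸ .refl p trivial
  | cons e l ih =>
    obtain rfl : G.init e = p := h.2.1 e rfl
    exact .step (H := G.full) e (Set.mem_univ e) (ih h.of_cons)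

theorem Subgraph.Reaches.exists_isReducedPath (h : H.Reaches p q) :
    ∃ l, G.IsReducedPath p q l ∧ ∀ e ∈ l, e ∈ H.edges := by
  induction h with
  | refl v _ => exact ⟨[], isReducedPath_nil v, by simp⟩
  | step e he _ ih =>
    obtain ⟨l, hl, hlH⟩ := ih
    by_cases hcancel : ∃ l', l = G.bar e :: l'
    · obtain ⟨l', rfl⟩ := hcancel
      exact ⟨l', by simpa [term_bar] using hl.of_cons, fun f hf => hlH f (.tail _ hf)⟩
    refine ⟨e :: l, hl.cons ?_, List.forall_mem_cons.mpr ⟨he, hlH⟩⟩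
    rintro f hf rfl
    obtain ⟨l', rfl⟩ := List.head?_eq_some_iff.mp hf
    exact hcancel ⟨l', rfl⟩

theorem Subgraph.ForestRel.mem_edges (h : G.full.ForestRel Λ') {c : List G.E}
    (hc : G.IsReducedCycle c) (he : e ∈ c) : e ∈ Λ'.edges :=
  h c ⟨hc, fun _ _ => trivial⟩ e he

theorem Subgraph.StrongForestRel.isReducedPath_eq_nil (h : G.full.StrongForestRel Λ')
    (hσ : G.IsReducedPath p q l) (hp : p ∈ Λ'.verts) (hq : q ∈ Λ'.verts)
    (hout : ∀ e ∈ l, e ∉ Λ'.edges) : l = [] := by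
  by_contra hne
  have hpC : p ∈ (G.full.component p).verts := .refl p trivial
  have hqC : q ∈ (G.full.component p).verts := hσ.reaches
  obtain hempty | hconn := h.2 _ (isCompOf_component (Set.mem_univ p))
  · exact Set.eq_empty_iff_forall_notMem.mp hempty p ⟨hpC, hp⟩
  obtain ⟨π, hπ, hπΛ⟩ := (hconn.2 q ⟨hqC, hq⟩ p ⟨hpC, hp⟩).exists_isReducedPath
  replace hπΛ : ∀ e ∈ π, e ∈ Λ'.edges := fun e he => (hπΛ e he).2
  rcases eq_or_ne π [] with rfl | hπne
  · obtain rfl : q = p := hπ.2.2.2 rfl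
    obtain ⟨c, hc, hcl⟩ := hσ.exists_isReducedCycle_subset hne
    obtain ⟨e, he⟩ := List.exists_mem_of_ne_nil c (isReducedCycle_iff.mp hc).1
    exact hout e (hcl he) (h.1.mem_edges hc he)
  -- the path leaves `Λ'` along `l` and returns along `π`, so it cannot backtrack at either junction
  have hcyc : G.IsReducedCycle (l ++ π) := by
    refine (hσ.append hπ ?_).isReducedCycle (by simp [hne]) ?_
    · rintro e he f hf rfl
      exact hout e (List.mem_of_getLast? he) (bar_mem_iff.mp (hπΛ _ (List.mem_of_mem_head? hf)))
    · rw [List.getLast?_append_of_ne_nil _ hπne, List.head?_append_of_ne_nil _ hne]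
      rintro e he f hf rfl
      exact hout _ (List.mem_of_mem_head? hf) (bar_mem_iff.mpr (hπΛ e (List.mem_of_getLast? he)))
  obtain ⟨e, he⟩ := List.exists_mem_of_ne_nil l hne
  exact hout e he (h.1.mem_edges hcyc (List.mem_append_left _ he))

def liftEdge (e : (G.quot Λ').E) : G.E := e.1

theorem init_mem_of_quot_term_eq_init {e f : (G.quot Λ').E}
    (h : (G.quot Λ').term e = (G.quot Λ').init f) (he : G.term (liftEdge e) ∈ Λ'.verts) :
    G.init (liftEdge f) ∈ Λ'.verts := by
  by_contra hf
  simp_all [quot, term, liftEdge]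

theorem term_eq_init_of_quot_term_eq_init {e f : (G.quot Λ').E}
    (h : (G.quot Λ').term e = (G.quot Λ').init f) (he : G.term (liftEdge e) ∉ Λ'.verts) :
    G.term (liftEdge e) = G.init (liftEdge f) := by
  by_cases hf : G.init (liftEdge f) ∈ Λ'.verts <;> simp_all [quot, term, liftEdge]

theorem Follows.of_quot {e f : (G.quot Λ').E} (h : (G.quot Λ').Follows e f)
    (he : G.term (liftEdge e) ∉ Λ'.verts) : G.Follows (liftEdge e) (liftEdge f) :=
  ⟨term_eq_init_of_quot_term_eq_init h.1 he, fun hf => h.2 (Subtype.ext hf)⟩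

theorem isChain_map_liftEdge {l : List (G.quot Λ').E} (hl : l.IsChain (G.quot Λ').Follows)
    (hstar : ∀ e ∈ l.dropLast, G.term (liftEdge e) ∉ Λ'.verts) :
    (l.map liftEdge).IsChain G.Follows := by
  induction l with
  | nil => simp
  | cons a l ih =>
    cases l with
    | nil => simp
    | cons b l =>
      rw [List.isChain_cons_cons] at hl
      rw [List.dropLast_cons_cons, List.forall_mem_cons] at hstar
      exact List.isChain_cons_cons.mpr ⟨hl.1.of_quot hstar.1, ih hl.2 hstar.2⟩

theorem isReducedCycle_map_liftEdge {l : List (G.quot Λ').E} (hl : (G.quot Λ').IsReducedCycle l)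
    (hstar : ∀ e ∈ l, G.term (liftEdge e) ∉ Λ'.verts) : G.IsReducedCycle (l.map liftEdge) := by
  obtain ⟨hne, hc, hcl⟩ := isReducedCycle_iff.mp hl
  refine isReducedCycle_iff.mpr ⟨by simpa using hne,
    isChain_map_liftEdge hc fun e he => hstar e (List.mem_of_mem_dropLast he), ?_⟩
  simp only [List.getLast?_map, List.head?_map, Option.mem_map]
  rintro _ ⟨e, he, rfl⟩ _ ⟨f, hf, rfl⟩
  exact (hcl e he f hf).of_quot (hstar e (List.mem_of_getLast? he))

/-- The arc of the cycle from `∗` to its first return to `∗` lifts to `G`. -/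
theorem exists_isReducedPath_of_isReducedCycle_quot {l : List (G.quot Λ').E}
    (hl : (G.quot Λ').IsReducedCycle l) (hstar : ∀ e ∈ l.getLast?, G.term (liftEdge e) ∈ Λ'.verts) :
    ∃ σ p q, σ ≠ [] ∧ G.IsReducedPath p q σ ∧ p ∈ Λ'.verts ∧ q ∈ Λ'.verts ∧
      ∀ e ∈ σ, e ∉ Λ'.edges := by
  classical
  obtain ⟨hne, hc, hcl⟩ := isReducedCycle_iff.mp hl
  obtain ⟨e₀, he₀⟩ : ∃ e₀, l.head? = some e₀ := ⟨_, List.head?_eq_some_head hne⟩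
  obtain ⟨e₁, he₁⟩ : ∃ e₁, l.getLast? = some e₁ := ⟨_, List.getLast?_eq_some_getLast hne⟩
  have hstart : G.init (liftEdge e₀) ∈ Λ'.verts :=
    init_mem_of_quot_term_eq_init (hcl e₁ he₁ e₀ he₀).1 (hstar e₁ he₁)
  obtain ⟨x, hx⟩ := Option.isSome_iff_exists.mp <|
    (List.find?_isSome (p := fun e => decide (G.term (liftEdge e) ∈ Λ'.verts))).mpr
      ⟨e₁, List.mem_of_getLast? he₁, by simpa using hstar e₁ he₁⟩
  obtain ⟨hxΛ, s, t, rfl, hs⟩ := List.find?_eq_some_iff_append.mp hx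
  refine ⟨(s ++ [x]).map liftEdge, G.init (liftEdge e₀), G.term (liftEdge x), by simp,
    ⟨?_, ?_, ?_, by simp⟩, hstart, by simpa using hxΛ,
    fun e he => by obtain ⟨a, -, rfl⟩ := List.mem_map.mp he; exact a.2⟩
  · exact isChain_map_liftEdge (hc.prefix ⟨t, by simp⟩) (by simpa using hs)
  · simp_all [List.head?_map, List.head?_append]
  · simp [List.getLast?_map]

end SGraph

theorem quot_forest_of_strong_forest_rel_general
    (G : SGraph)
    (Λ' : SGraph.Subgraph G)
    (h : (G.full).StrongForestRel Λ') :
    (G.quot Λ').IsForestGraph := by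
  intro l hl
  by_cases hstar : ∃ e ∈ l, G.term (SGraph.liftEdge e) ∈ Λ'.verts
  · obtain ⟨e, he, he_star⟩ := hstar
    obtain ⟨u, w, rfl⟩ := List.append_of_mem he
    have hrot : (G.quot Λ').IsReducedCycle (w ++ (u ++ [e])) :=
      SGraph.IsReducedCycle.append_comm (by simpa using hl)
    obtain ⟨σ, p, q, hne, hσ, hp, hq, hout⟩ :=
      SGraph.exists_isReducedPath_of_isReducedCycle_quot hrot (by simpa using he_star)
    exact hne (h.isReducedPath_eq_nil hσ hp hq hout)
  · push Not at hstar
    obtain ⟨e, he⟩ := List.exists_mem_of_ne_nil l hl.1.1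
    exact e.2 (h.1.mem_edges (SGraph.isReducedCycle_map_liftEdge hl hstar) (List.mem_map_of_mem he))

/-- If `Λ` (here: the full subgraph of `G`) is a strong forest
relative to a subgraph `Λ'`, then the quotient graph `Λ/Λ'` is a forest. -/
theorem quot_forest_of_strong_forest_rel
    (G : SGraph) [Fintype G.V] [Fintype G.E]
    (Λ' : SGraph.Subgraph G)
    (h : (G.full).StrongForestRel Λ') :
    (G.quot Λ').IsForestGraph :=
  quot_forest_of_strong_forest_rel_general G Λ' h
end

section
/- Let Λ be a graph and Λ' a subgraph of Λ. If the quotient graph Λ/Λ' is a forest, then Λ is a strong forest relative to Λ'. -/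
theorem Cycle.chain_coe_iff {α : Type*} {r : α → α → Prop} {l : List α} :
    Cycle.Chain r (l : Cycle α) ↔
      l.IsChain r ∧ ∀ a ∈ l.head?, ∀ b ∈ l.getLast?, r b a := by
  cases l with
  | nil => simp
  | cons a t =>
    rw [Cycle.chain_coe_cons, ← List.cons_append, List.isChain_append]
    simp

namespace SGraph

inductive Joins (G : SGraph) : G.V → G.V → List G.E → Prop
  | nil (v : G.V) : Joins G v v []
  | cons (e : G.E) {q : G.V} {l : List G.E} :
      Joins G (G.term e) q l → Joins G (G.init e) q (e :: l)

variable {G : SGraph}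

def IsReduced (l : List G.E) : Prop := l.IsChain fun e f => f ≠ G.bar e

theorem Subgraph.term_mem {H : Subgraph G} {e : G.E} (he : e ∈ H.edges) : G.term e ∈ H.verts :=
  H.init_mem (H.bar_mem he)

theorem isReducedCycle_iff_s2 {l : List G.E} :
    G.IsReducedCycle l ↔ l ≠ [] ∧
      Cycle.Chain (fun e f => G.term e = G.init f) (l : Cycle G.E) ∧
      Cycle.Chain (fun e f => f ≠ G.bar e) (l : Cycle G.E) := by
  simp only [Cycle.chain_coe_iff, IsReducedCycle, IsCycle, Option.mem_def]
  tauto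

theorem IsReducedCycle.of_isRotated {l l' : List G.E} (h : G.IsReducedCycle l) (hr : l ~r l') :
    G.IsReducedCycle l' := by
  rw [isReducedCycle_iff_s2, ← Cycle.coe_eq_coe.2 hr] at *
  exact ⟨fun hl' => h.1 (List.isRotated_nil_iff.1 (hl' ▸ hr)), h.2⟩

theorem joins_cons_iff {p q : G.V} {e : G.E} {l : List G.E} :
    G.Joins p q (e :: l) ↔ p = G.init e ∧ G.Joins (G.term e) q l := by
  constructor
  · rintro (_ | ⟨_, h⟩)
    exact ⟨rfl, h⟩
  · rintro ⟨rfl, h⟩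
    exact .cons e h

theorem joins_append_iff {p q : G.V} {a b : List G.E} :
    G.Joins p q (a ++ b) ↔ ∃ y, G.Joins p y a ∧ G.Joins y q b := by
  induction a generalizing p with
  | nil => exact ⟨fun h => ⟨p, .nil p, h⟩, fun ⟨y, ha, hb⟩ => by cases ha; exact hb⟩
  | cons e t ih =>
    constructor
    · rintro (_ | ⟨_, h⟩)
      obtain ⟨y, ht, hb⟩ := ih.1 h
      exact ⟨y, .cons e ht, hb⟩
    · rintro ⟨y, _ | ⟨_, ht⟩, hb⟩
      exact .cons e (ih.2 ⟨y, ht, hb⟩)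

namespace Joins

variable {p q : G.V} {l : List G.E}

theorem eq_of_nil (h : G.Joins p q []) : p = q := by
  cases h; rfl

theorem init_head (h : G.Joins p q l) : ∀ e ∈ l.head?, G.init e = p := by
  cases h <;> simp

theorem term_getLast (h : G.Joins p q l) : ∀ f ∈ l.getLast?, G.term f = q := by
  induction l generalizing p with
  | nil => simp
  | cons e t ih =>
    rcases h with _ | ⟨_, h⟩
    rcases t with _ | ⟨g, t⟩
    · simpa using h.eq_of_nil
    · simpa using ih h

theorem isChain (h : G.Joins p q l) : G.IsChain l := by
  induction h with
  | nil => exact List.isChain_nil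
  | cons e h ih => exact List.IsChain.cons ih fun f hf => (h.init_head f hf).symm

theorem reverse (h : G.Joins p q l) : G.Joins q p (l.reverse.map G.bar) := by
  induction h with
  | nil v => exact .nil v
  | cons e h ih =>
    rw [List.reverse_cons, List.map_append, List.map_singleton]
    refine joins_append_iff.2 ⟨_, ih, .cons (G.bar e) ?_⟩
    rw [term_bar]
    exact .nil _

end Joins

theorem joins_of_isChain {l : List G.E} (hl : G.IsChain l) :
    ∀ {e f : G.E}, e ∈ l.head? → f ∈ l.getLast? → G.Joins (G.init e) (G.term f) l := by
  induction l with
  | nil => simp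
  | cons a t ih =>
    intro e f he hf
    obtain rfl : a = e := by simpa using he
    cases t with
    | nil =>
      obtain rfl : a = f := by simpa using hf
      exact .cons a (.nil _)
    | cons b t =>
      have hab := (List.isChain_cons_cons.1 hl).1
      have := ih (List.isChain_cons_cons.1 hl).2 rfl (by simpa using hf)
      rw [← hab] at this
      exact .cons a this

theorem IsReducedCycle.joins {l : List G.E} (h : G.IsReducedCycle l) {e : G.E}
    (he : e ∈ l.head?) : G.Joins (G.init e) (G.init e) l := by
  obtain ⟨⟨hne, hchain, hclosed⟩, -⟩ := h
  obtain ⟨f, hf⟩ := Option.isSome_iff_exists.1 (List.getLast?_isSome.2 hne)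
  have h := joins_of_isChain hchain he hf
  rwa [hclosed e f he hf] at h

theorem isReducedCycle_of_joins {x : G.V} {l : List G.E} (h : G.Joins x x l) (hne : l ≠ [])
    (hred : G.IsReduced l) (hwrap : ∀ e ∈ l.head?, ∀ f ∈ l.getLast?, e ≠ G.bar f) :
    G.IsReducedCycle l :=
  ⟨⟨hne, h.isChain, fun e f he hf => (h.term_getLast f hf).trans (h.init_head e he).symm⟩,
    hred, fun e f he hf => hwrap e he f hf⟩

theorem IsForestGraph.eq_nil_of_joins (hG : G.IsForestGraph) {x : G.V} {l : List G.E}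
    (h : G.Joins x x l) (hred : G.IsReduced l) : l = [] := by
  induction hn : l.length using Nat.strong_induction_on generalizing x l with
  | _ n ih =>
  by_contra hne
  obtain ⟨e, t, rfl⟩ := List.exists_cons_of_ne_nil hne
  obtain ⟨f, hf⟩ := Option.isSome_iff_exists.1 (List.getLast?_isSome.2 hne)
  by_cases hef : e = G.bar f
  · obtain ⟨t₀, rfl⟩ : ∃ t₀, t = t₀ ++ [f] := by
      rcases List.eq_nil_or_concat' t with rfl | ⟨t₀, g, rfl⟩
      · obtain rfl : e = f := by simpa using hf
        exact absurd hef.symm (G.bar_ne e)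
      · rw [← List.cons_append, List.getLast?_concat, Option.some_inj] at hf
        subst hf
        exact ⟨t₀, rfl⟩
    have hmid : G.term e = G.init f := by rw [hef, term_bar]
    obtain ⟨y, ht₀, hy⟩ := joins_append_iff.1 (joins_cons_iff.1 h).2
    obtain rfl : y = G.init f := (joins_cons_iff.1 hy).1
    rw [← hmid] at ht₀
    obtain rfl : t₀ = [] := ih t₀.length (by simp [← hn]) ht₀
      (List.IsChain.infix hred ⟨[e], [f], rfl⟩) rfl
    exact (List.isChain_pair.1 hred) (by rw [hef, G.bar_bar])
  · exact hG _ (isReducedCycle_of_joins h hne hred (by simpa [hf] using hef))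

theorem exists_joins_isReduced {p q : G.V} {l : List G.E} (h : G.Joins p q l) :
    ∃ l', G.Joins p q l' ∧ G.IsReduced l' := by
  induction h with
  | nil v => exact ⟨[], .nil v, List.isChain_nil⟩
  | cons e h ih =>
    obtain ⟨_ | ⟨f, t⟩, h', hred⟩ := ih
    · exact ⟨[e], .cons e h', List.isChain_singleton e⟩
    · by_cases hf : f = G.bar e
      · rw [hf, joins_cons_iff, term_bar] at h'
        exact ⟨t, h'.2, hred.tail⟩
      · exact ⟨e :: f :: t, .cons e h', hred.cons_cons hf⟩

theorem exists_joins_of_reaches {H : Subgraph G} {p q : G.V} (h : H.Reaches p q) :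
    ∃ l, G.Joins p q l := by
  induction h with
  | refl v => exact ⟨[], .nil v⟩
  | step e _ _ ih =>
    obtain ⟨l, hl⟩ := ih
    exact ⟨e :: l, .cons e hl⟩

theorem Joins.reaches {K : Subgraph G} {p q : G.V} {l : List G.E} (h : G.Joins p q l)
    (hp : p ∈ K.verts) (hK : ∀ e ∈ l, G.init e ∈ K.verts → e ∈ K.edges) :
    K.Reaches p q := by
  induction h with
  | nil v => exact .refl v hp
  | cons e _ ih =>
    have he := hK e List.mem_cons_self hp
    exact .step e he (ih (Subgraph.term_mem he) fun f hf => hK f (List.mem_cons_of_mem e hf))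

section Quotient

variable {Λ' : Subgraph G}

open Classical in
noncomputable def quotMk (Λ' : Subgraph G) (v : G.V) : (G.quot Λ').V :=
  if h : v ∈ Λ'.verts then none else some ⟨v, h⟩

theorem quotMk_of_mem {v : G.V} (hv : v ∈ Λ'.verts) : quotMk Λ' v = none :=
  dif_pos hv

theorem joins_quot {p q : G.V} {m : List {e : G.E // e ∉ Λ'.edges}}
    (h : G.Joins p q (m.map Subtype.val)) :
    (G.quot Λ').Joins (quotMk Λ' p) (quotMk Λ' q) m := by
  induction m generalizing p with
  | nil => rw [Joins.eq_of_nil h]; exact .nil _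
  | cons e m ih =>
    rw [List.map_cons, joins_cons_iff] at h
    obtain ⟨rfl, h⟩ := h
    exact Joins.cons (G := G.quot Λ') e (ih h)

theorem isReduced_quot {m : List {e : G.E // e ∉ Λ'.edges}}
    (h : G.IsReduced (m.map Subtype.val)) : (G.quot Λ').IsReduced m :=
  ((List.isChain_map _).1 h).imp fun _ _ hab hba => hab (congrArg Subtype.val hba)

theorem isReducedCycle_quot {m : List {e : G.E // e ∉ Λ'.edges}}
    (h : G.IsReducedCycle (m.map Subtype.val)) : (G.quot Λ').IsReducedCycle m := by
  rw [isReducedCycle_iff_s2, ← Cycle.map_coe, Cycle.chain_map, Cycle.chain_map] at h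
  exact isReducedCycle_iff_s2.2 ⟨fun hm => h.1 (List.map_eq_nil_iff.2 hm),
    h.2.1.imp fun _ _ hab => congrArg (quotMk Λ') hab,
    h.2.2.imp fun _ _ hab hba => hab (congrArg Subtype.val hba)⟩

theorem exists_prefix_joins_of_head_not_mem {p q : G.V} {e : G.E} {t : List G.E}
    (h : G.Joins p q (e :: t)) (he : e ∉ Λ'.edges) (hq : q ∈ Λ'.verts) :
    ∃ s v, s ≠ [] ∧ s <+: e :: t ∧ G.Joins p v s ∧ v ∈ Λ'.verts ∧
      ∀ f ∈ s, f ∉ Λ'.edges := by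
  induction t generalizing p e with
  | nil => exact ⟨[e], q, List.cons_ne_nil _ _, List.prefix_rfl, h, hq, by simpa⟩
  | cons f t ih =>
    rw [joins_cons_iff] at h
    obtain ⟨rfl, h⟩ := h
    by_cases hv : G.term e ∈ Λ'.verts
    · exact ⟨[e], G.term e, List.cons_ne_nil _ _, ⟨f :: t, rfl⟩, .cons e (.nil _), hv,
        by simpa⟩
    · have hf : f ∉ Λ'.edges := fun hf => hv ((joins_cons_iff.1 h).1 ▸ Λ'.init_mem hf)
      obtain ⟨s, v, -, hs, hsj, hv, hout⟩ := ih h hf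
      exact ⟨e :: s, v, List.cons_ne_nil _ _, (List.prefix_cons_inj e).2 hs, .cons e hsj, hv,
        List.forall_mem_cons.2 ⟨he, hout⟩⟩

theorem edgesIn_of_joins (hT : (G.quot Λ').IsForestGraph) {p q : G.V} {l : List G.E}
    (h : G.Joins p q l) (hred : G.IsReduced l) (hp : p ∈ Λ'.verts) (hq : q ∈ Λ'.verts) :
    Λ'.EdgesIn l := by
  induction h with
  | nil => simp [Subgraph.EdgesIn]
  | cons e h ih =>
    by_cases he : e ∈ Λ'.edges
    · exact List.forall_mem_cons.2 ⟨he, ih hred.tail (Subgraph.term_mem he) hq⟩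
    · obtain ⟨s, v, hne, hpre, hs, hv, hout⟩ :=
        exists_prefix_joins_of_head_not_mem (.cons e h) he hq
      lift s to List {f : G.E // f ∉ Λ'.edges} using hout
      have hm := joins_quot hs
      rw [quotMk_of_mem hp, quotMk_of_mem hv] at hm
      exact hne.elim <| List.map_eq_nil_iff.2 <|
        hT.eq_nil_of_joins hm (isReduced_quot (hred.prefix hpre))

theorem forestRel_of_quot_forest (hT : (G.quot Λ').IsForestGraph) : (full G).ForestRel Λ' := by
  rintro l ⟨hl, -⟩
  by_cases hvisit : ∃ f ∈ l, G.init f ∈ Λ'.verts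
  · obtain ⟨f, hf, hfv⟩ := hvisit
    obtain ⟨a, c, rfl⟩ := List.append_of_mem hf
    have hr : G.IsReducedCycle (f :: c ++ a) := hl.of_isRotated List.isRotated_append
    have := edgesIn_of_joins hT (hr.joins rfl) hr.2.1 hfv hfv
    exact fun e he => this e (List.isRotated_append.mem_iff.1 he)
  · lift l to List {e : G.E // e ∉ Λ'.edges} using
      fun e he hmem => hvisit ⟨e, he, Λ'.init_mem hmem⟩
    exact absurd (isReducedCycle_quot hl) (hT _)

theorem connected_inter_of_isCompOf (hT : (G.quot Λ').IsForestGraph) {C : Subgraph G}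
    (hC : C.IsCompOf (full G)) (hne : (C.inter Λ').verts.Nonempty) : (C.inter Λ').Connected := by
  obtain ⟨v, -, hV, hE⟩ := hC
  refine ⟨hne, fun p ⟨hpC, hpΛ⟩ q ⟨hqC, hqΛ⟩ => ?_⟩
  obtain ⟨a, ha⟩ := exists_joins_of_reaches ((Set.ext_iff.1 hV p).1 hpC)
  obtain ⟨b, hb⟩ := exists_joins_of_reaches ((Set.ext_iff.1 hV q).1 hqC)
  obtain ⟨l, hl, hred⟩ := exists_joins_isReduced (joins_append_iff.2 ⟨v, ha.reverse, hb⟩)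
  have hlΛ := edgesIn_of_joins hT hl hred hpΛ hqΛ
  refine hl.reaches ⟨hpC, hpΛ⟩ fun e he heC => ⟨?_, hlΛ e he⟩
  rw [hE]
  exact ⟨trivial, heC.1⟩

end Quotient

end SGraph

theorem strong_forest_rel_of_quot_forest_general
    (G : SGraph)
    (Λ' : SGraph.Subgraph G)
    (h : (G.quot Λ').IsForestGraph) :
    (G.full).StrongForestRel Λ' :=
  ⟨SGraph.forestRel_of_quot_forest h, fun _ hC =>
    (Set.eq_empty_or_nonempty _).imp_right (SGraph.connected_inter_of_isCompOf h hC)⟩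

/-- If the quotient graph `Λ/Λ'` is a forest, then `Λ` (here: the
full subgraph of `G`) is a strong forest relative to the subgraph `Λ'`. -/
theorem strong_forest_rel_of_quot_forest
    (G : SGraph) [Fintype G.V] [Fintype G.E]
    (Λ' : SGraph.Subgraph G)
    (h : (G.quot Λ').IsForestGraph) :
    (G.full).StrongForestRel Λ' :=
  strong_forest_rel_of_quot_forest_general G Λ' h
end
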